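/- arXiv:1303.4537 — 3 statements merged into one kernel-verified Lean document; each statement's English description precedes it below -/
import Mathlib

section
/- Hölder–weighted-Hölder product inequality: Let (X,d) be a metric space with a fixed base point x₀ and let α, β ∈ [0,1]. For every f ∈ H_α(X,ℂ) (a bounded α-Hölder function) and every g ∈ H_{α,β}(X,ℂ), the product fg belongs to H_{α,β}(X,ℂ) and ‖fg‖_{α,β} ≤ ‖f‖_α ‖g‖_{α,β}. -/
/-!
Split `f x * g x - f y * g y = (f x - f y) * g x + f y * (g x - g y)` and let `g` carry the
weight `1 + d(x, x₀)^β`: this gives `N_β(fg) ≤ ‖f‖_∞ N_β(g)` and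
`m_{α,β}(fg) ≤ N_β(g) m_α(f) + ‖f‖_∞ m_{α,β}(g)`, three of the four terms in the expansion
of `‖f‖_α ‖g‖_{α,β}`.
-/

open scoped ENNReal

namespace WeightedHolder

/-- The weighted sup-seminorm `N_β(f) = sup_x |f(x)| / (1 + d(x,x₀)^β)`. -/
noncomputable def Nbeta {X : Type*} [MetricSpace X] (x₀ : X) (β : ℝ) (f : X → ℂ) : ℝ≥0∞ :=
  ⨆ x : X, ENNReal.ofReal (‖f x‖ / (1 + dist x x₀ ^ β))

/-- The weighted Hölder seminorm
`m_{α,β}(f) = sup_{x≠y} |f(x)−f(y)| / (d(x,y)^α (1 + d(x,x₀)^β))`. -/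
noncomputable def mab {X : Type*} [MetricSpace X] (x₀ : X) (α β : ℝ) (f : X → ℂ) : ℝ≥0∞ :=
  ⨆ (x : X) (y : X) (_ : x ≠ y),
    ENNReal.ofReal (‖f x - f y‖ / (dist x y ^ α * (1 + dist x x₀ ^ β)))

/-- The weighted Hölder norm `‖f‖_{α,β} = N_β(f) + m_{α,β}(f)`. -/
noncomputable def whNorm {X : Type*} [MetricSpace X] (x₀ : X) (α β : ℝ) (f : X → ℂ) : ℝ≥0∞ :=
  Nbeta x₀ β f + mab x₀ α β f

/-- Membership in the weighted Hölder space `H_{α,β}(X,ℂ)`: continuous with finite norm. -/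
def MemWH {X : Type*} [MetricSpace X] (x₀ : X) (α β : ℝ) (f : X → ℂ) : Prop :=
  Continuous f ∧ whNorm x₀ α β f < ⊤

/-- The sup norm `‖f‖_∞` (as an extended real). -/
noncomputable def supNormC {X : Type*} [MetricSpace X] (f : X → ℂ) : ℝ≥0∞ :=
  ⨆ x : X, ENNReal.ofReal (‖f x‖)

/-- The (unweighted) α-Hölder seminorm `m_α(f) = sup_{x≠y} |f(x)−f(y)| / d(x,y)^α`. -/
noncomputable def mAlpha {X : Type*} [MetricSpace X] (α : ℝ) (f : X → ℂ) : ℝ≥0∞ :=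
  ⨆ (x : X) (y : X) (_ : x ≠ y), ENNReal.ofReal (‖f x - f y‖ / dist x y ^ α)

/-- The α-Hölder norm `‖f‖_α = ‖f‖_∞ + m_α(f)`. -/
noncomputable def hNorm {X : Type*} [MetricSpace X] (α : ℝ) (f : X → ℂ) : ℝ≥0∞ :=
  supNormC f + mAlpha α f

/-- Membership in `H_α(X,ℂ)`, the space of bounded α-Hölder functions. -/
def MemH {X : Type*} [MetricSpace X] (α : ℝ) (f : X → ℂ) : Prop :=
  Continuous f ∧ hNorm α f < ⊤

theorem norm_mul_sub_mul_le {R : Type*} [SeminormedRing R] (a b c d : R) :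
    ‖a * b - c * d‖ ≤ ‖a - c‖ * ‖b‖ + ‖c‖ * ‖b - d‖ := by
  calc ‖a * b - c * d‖ = ‖(a - c) * b + c * (b - d)‖ := by noncomm_ring
    _ ≤ ‖a - c‖ * ‖b‖ + ‖c‖ * ‖b - d‖ :=
      (norm_add_le _ _).trans (add_le_add (norm_mul_le _ _) (norm_mul_le _ _))

section

variable {X : Type*} [MetricSpace X]

theorem ofReal_norm_le_supNormC (f : X → ℂ) (x : X) : ENNReal.ofReal ‖f x‖ ≤ supNormC f :=
  le_iSup (fun x => ENNReal.ofReal ‖f x‖) x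

theorem ofReal_le_Nbeta (x₀ : X) (β : ℝ) (f : X → ℂ) (x : X) :
    ENNReal.ofReal (‖f x‖ / (1 + dist x x₀ ^ β)) ≤ Nbeta x₀ β f :=
  le_iSup (fun x => ENNReal.ofReal (‖f x‖ / (1 + dist x x₀ ^ β))) x

theorem ofReal_le_mAlpha (α : ℝ) (f : X → ℂ) {x y : X} (hxy : x ≠ y) :
    ENNReal.ofReal (‖f x - f y‖ / dist x y ^ α) ≤ mAlpha α f :=
  le_iSup_of_le x <| le_iSup₂_of_le y hxy le_rfl

theorem ofReal_le_mab (x₀ : X) (α β : ℝ) (f : X → ℂ) {x y : X} (hxy : x ≠ y) :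
    ENNReal.ofReal (‖f x - f y‖ / (dist x y ^ α * (1 + dist x x₀ ^ β))) ≤ mab x₀ α β f :=
  le_iSup_of_le x <| le_iSup₂_of_le y hxy le_rfl

theorem Nbeta_mul_le (x₀ : X) (β : ℝ) (f g : X → ℂ) :
    Nbeta x₀ β (f * g) ≤ supNormC f * Nbeta x₀ β g := by
  refine iSup_le fun x => ?_
  rw [Pi.mul_apply, norm_mul, mul_div_assoc, ENNReal.ofReal_mul (norm_nonneg _)]
  exact mul_le_mul' (ofReal_norm_le_supNormC f x) (ofReal_le_Nbeta x₀ β g x)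

theorem mab_mul_le (x₀ : X) (α β : ℝ) (f g : X → ℂ) :
    mab x₀ α β (f * g) ≤ Nbeta x₀ β g * mAlpha α f + supNormC f * mab x₀ α β g := by
  refine iSup₂_le fun x y => iSup_le fun hxy => ?_
  set D := dist x y ^ α
  set W := 1 + dist x x₀ ^ β
  have hD : 0 ≤ D := by positivity
  have hW : 0 ≤ W := by positivity
  have hsplit : ‖f x * g x - f y * g y‖ / (D * W)
      ≤ ‖g x‖ / W * (‖f x - f y‖ / D) + ‖f y‖ * (‖g x - g y‖ / (D * W)) := by
    rw [div_mul_div_comm, mul_comm W D, mul_div_assoc', ← add_div, mul_comm ‖g x‖]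
    gcongr
    exact norm_mul_sub_mul_le _ _ _ _
  calc ENNReal.ofReal (‖(f * g) x - (f * g) y‖ / (D * W))
      ≤ ENNReal.ofReal (‖g x‖ / W) * ENNReal.ofReal (‖f x - f y‖ / D)
        + ENNReal.ofReal ‖f y‖ * ENNReal.ofReal (‖g x - g y‖ / (D * W)) := by
        rw [← ENNReal.ofReal_mul (by positivity), ← ENNReal.ofReal_mul (norm_nonneg _)]
        exact (ENNReal.ofReal_le_ofReal hsplit).trans ENNReal.ofReal_add_le
    _ ≤ Nbeta x₀ β g * mAlpha α f + supNormC f * mab x₀ α β g := by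
      gcongr
      exacts [ofReal_le_Nbeta x₀ β g x, ofReal_le_mAlpha α f hxy,
        ofReal_norm_le_supNormC f y, ofReal_le_mab x₀ α β g hxy]

theorem whNorm_mul_le (x₀ : X) (α β : ℝ) (f g : X → ℂ) :
    whNorm x₀ α β (f * g) ≤ hNorm α f * whNorm x₀ α β g :=
  calc whNorm x₀ α β (f * g)
      ≤ supNormC f * Nbeta x₀ β g + (Nbeta x₀ β g * mAlpha α f + supNormC f * mab x₀ α β g) :=
        add_le_add (Nbeta_mul_le x₀ β f g) (mab_mul_le x₀ α β f g)
    _ ≤ supNormC f * Nbeta x₀ β g + (Nbeta x₀ β g * mAlpha α f + supNormC f * mab x₀ α β g)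
        + mAlpha α f * mab x₀ α β g := le_self_add
    _ = hNorm α f * whNorm x₀ α β g := by rw [hNorm, whNorm]; ring

end

theorem holder_weighted_holder_product_general {X : Type*} [MetricSpace X] (x₀ : X) (α β : ℝ)
    (f g : X → ℂ) (hf : MemH α f) (hg : MemWH x₀ α β g) :
    MemWH x₀ α β (fun x => f x * g x) ∧
      whNorm x₀ α β (fun x => f x * g x) ≤ hNorm α f * whNorm x₀ α β g := by
  have hbound := whNorm_mul_le x₀ α β f g
  exact ⟨⟨hf.1.mul hg.1, hbound.trans_lt (ENNReal.mul_lt_top hf.2 hg.2)⟩, hbound⟩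

/-- **Hölder–weighted-Hölder product inequality.**
For `f ∈ H_α(X,ℂ)` and `g ∈ H_{α,β}(X,ℂ)`, the product `fg` belongs to `H_{α,β}(X,ℂ)`
and `‖fg‖_{α,β} ≤ ‖f‖_α ‖g‖_{α,β}`. -/
theorem holder_weighted_holder_product {X : Type*} [MetricSpace X] (x₀ : X) (α β : ℝ)
    (hα : α ∈ Set.Icc (0:ℝ) 1) (hβ : β ∈ Set.Icc (0:ℝ) 1)
    (f g : X → ℂ) (hf : MemH α f) (hg : MemWH x₀ α β g) :
    MemWH x₀ α β (fun x => f x * g x) ∧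
      whNorm x₀ α β (fun x => f x * g x) ≤ hNorm α f * whNorm x₀ α β g :=
  holder_weighted_holder_product_general x₀ α β f g hf hg

end WeightedHolder
end

section
/- Exponential covariance decay under geometric ergodicity: Let (X_i)_{i≥0} be a stationary Markov chain on (X,A) with transition probability P and invariant initial distribution ν, and suppose that for some m ∈ [1,∞] there is a complex Banach space B of measurable functions X → ℂ satisfying conditions (A), (B), and (C). Then there exists a constant C > 0 such that for all f ∈ B and all g ∈ L^s(ν) with s = m/(m−1), and all k ≥ 0, |Cov( g(X₀), f(X_k) )| ≤ C ‖g‖_{L^s(ν)} ‖f‖_B θ^k, where θ ∈ [0,1) is the rate from condition (C) and Cov(g(X₀),f(X_k)) = E[ g(X₀)·(f(X_k) − νf) ]. -/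
open MeasureTheory Filter ProbabilityTheory
open scoped ENNReal NNReal

namespace SECLT

/-! ### The space `ℓ^∞(S)` and Hoffmann–Jørgensen convergence in distribution -/

/-- The sup-distance between two `S`-indexed families of reals (the `ℓ^∞(S)` distance). -/
noncomputable def supDist {S : Type*} (x y : S → ℝ) : ℝ≥0∞ :=
  ⨆ s : S, ENNReal.ofReal |x s - y s|

/-- Continuity of a functional on `ℓ^∞(S)` with respect to the sup-distance. -/
def SupContinuous {S : Type*} (φ : (S → ℝ) → ℝ) : Prop :=
  ∀ x : S → ℝ, ∀ ε : ℝ, 0 < ε → ∃ δ : ℝ, 0 < δ ∧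
    ∀ y : S → ℝ, supDist x y ≤ ENNReal.ofReal δ → |φ x - φ y| ≤ ε

/-- Boundedness of a functional on `ℓ^∞(S)`. -/
def BoundedFunctional {S : Type*} (φ : (S → ℝ) → ℝ) : Prop :=
  ∃ M : ℝ, ∀ x, |φ x| ≤ M

/-- Outer expectation `E* Z = inf { E Y : Y measurable integrable, Y ≥ Z }`. -/
noncomputable def outerExp {Ω : Type*} [MeasurableSpace Ω] (P : Measure Ω) (Z : Ω → ℝ) : ℝ :=
  sInf {r : ℝ | ∃ Y : Ω → ℝ, Measurable Y ∧ Integrable Y P ∧ (∀ ω, Z ω ≤ Y ω) ∧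
    (∫ ω, Y ω ∂P) = r}

/-- Hoffmann–Jørgensen convergence in distribution in `ℓ^∞(S)`: `E*(φ(Y_n)) → E(φ(K))`
for all bounded sup-continuous `φ`. -/
def ConvInDistr {S Ω Ω' : Type*} [MeasurableSpace Ω] [MeasurableSpace Ω'] (P : Measure Ω)
    (Y : ℕ → Ω → S → ℝ) (P' : Measure Ω') (K : Ω' → S → ℝ) : Prop :=
  ∀ φ : (S → ℝ) → ℝ, BoundedFunctional φ → SupContinuous φ →
    Tendsto (fun n => outerExp P fun ω => φ (Y n ω)) atTop
      (nhds (outerExp P' fun ω => φ (K ω)))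

/-- A process indexed by `S` is a centred Gaussian process: every finite linear combination
of its values has a centred Gaussian distribution. -/
def IsCenteredGaussian {S Ω' : Type*} [MeasurableSpace Ω'] (P' : Measure Ω')
    (K : Ω' → S → ℝ) : Prop :=
  ∀ (k : ℕ) (pts : Fin k → S) (a : Fin k → ℝ), ∃ v : ℝ≥0,
    Measure.map (fun ω => ∑ i, a i * K ω (pts i)) P' = gaussianReal 0 v

/-- Total boundedness with respect to the sup-distance. -/
def SupTotallyBounded {S : Type*} (T : Set (S → ℝ)) : Prop :=
  ∀ δ : ℝ, 0 < δ → ∃ A : Finset (S → ℝ), ∀ x ∈ T, ∃ y ∈ A, supDist x y ≤ ENNReal.ofReal δ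

/-- Closedness with respect to the sup-distance. -/
def SupClosed' {S : Type*} (T : Set (S → ℝ)) : Prop :=
  ∀ x : S → ℝ, (∀ ε : ℝ, 0 < ε → ∃ y ∈ T, supDist x y ≤ ENNReal.ofReal ε) → x ∈ T

/-- Tightness of the law of an `ℓ^∞(S)`-valued random element: for every `ε > 0` there is a
compact (= totally bounded and closed) set carrying all but `ε` of the (outer) mass. -/
def TightProcess {S Ω' : Type*} [MeasurableSpace Ω'] (P' : Measure Ω')
    (K : Ω' → S → ℝ) : Prop :=
  ∀ ε : ℝ, 0 < ε → ∃ T : Set (S → ℝ), SupTotallyBounded T ∧ SupClosed' T ∧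
    P' {ω | K ω ∉ T} ≤ ENNReal.ofReal ε

/-- Weak measurability of an `ℓ^∞(S)`-valued random element: compositions with bounded
sup-continuous functionals are measurable. -/
def WeaklyMeasurable {S Ω' : Type*} [MeasurableSpace Ω'] (K : Ω' → S → ℝ) : Prop :=
  ∀ φ : (S → ℝ) → ℝ, BoundedFunctional φ → SupContinuous φ →
    Measurable fun ω => φ (K ω)

/-- Separability of an `ℓ^∞(S)`-valued random element: almost surely the values lie in the
sup-closure of a countable set. -/
def SeparableValued {S Ω' : Type*} [MeasurableSpace Ω'] (P' : Measure Ω')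
    (K : Ω' → S → ℝ) : Prop :=
  ∃ T : Set (S → ℝ), T.Countable ∧
    ∀ᵐ ω ∂P', ∀ ε : ℝ, 0 < ε → ∃ y ∈ T, supDist (K ω) y ≤ ENNReal.ofReal ε

/-! ### Processes, covariance, stationarity, the sequential empirical process -/

/-- Covariance of two real random variables. -/
noncomputable def cov {Ω : Type*} [MeasurableSpace Ω] (P : Measure Ω) (Y Z : Ω → ℝ) : ℝ :=
  (∫ ω, Y ω * Z ω ∂P) - (∫ ω, Y ω ∂P) * (∫ ω, Z ω ∂P)

/-- A uniformly (sup-norm) bounded class of functions. -/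
def UnifBounded {𝓧 : Type*} (F : Set (𝓧 → ℝ)) : Prop :=
  ∃ M : ℝ, ∀ f ∈ F, ∀ x, |f x| ≤ M

/-- Stationarity of a process: the joint law is invariant under the time shift. -/
def IsStationary {Ω 𝓧 : Type*} [MeasurableSpace Ω] [MeasurableSpace 𝓧] (P : Measure Ω)
    (X : ℕ → Ω → 𝓧) : Prop :=
  ∀ k : ℕ, Measure.map (fun ω (i : ℕ) => X (i + k) ω) P
    = Measure.map (fun ω (i : ℕ) => X i ω) P

/-- The normalized sequential partial sum
`n^{-1/2} ∑_{i=1}^{⌊nt⌋} (f(X_i) - μ f)`. -/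
noncomputable def seqSum {Ω 𝓧 : Type*} [MeasurableSpace 𝓧] (X : ℕ → Ω → 𝓧)
    (μ : Measure 𝓧) (f : 𝓧 → ℝ) (t : ℝ) (n : ℕ) (ω : Ω) : ℝ :=
  (Real.sqrt (n : ℝ))⁻¹ * ∑ i ∈ Finset.Icc 1 ⌊(n : ℝ) * t⌋₊, (f (X i ω) - ∫ x, f x ∂μ)

/-- The sequential empirical process `U_n`, as a random element of `ℓ^∞(F × [0,1])`. -/
noncomputable def seqEmpProc {Ω 𝓧 : Type*} [MeasurableSpace 𝓧] (X : ℕ → Ω → 𝓧)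
    (μ : Measure 𝓧) (F : Set (𝓧 → ℝ)) (n : ℕ) (ω : Ω) :
    (↥F × ↥(Set.Icc (0:ℝ) 1)) → ℝ :=
  fun p => seqSum X μ (p.1 : 𝓧 → ℝ) (p.2 : ℝ) n ω

/-- The limiting (Kiefer) covariance structure:
`Cov(K(f₁,t₁),K(f₂,t₂)) = min(t₁,t₂) (∑_{k≥0} Cov(f₁(X₀),f₂(X_k)) + ∑_{k≥1} Cov(f₁(X_k),f₂(X₀)))`. -/
def HasKieferCovariance {Ω Ω' 𝓧 : Type*} [MeasurableSpace Ω] [MeasurableSpace Ω']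
    [MeasurableSpace 𝓧] (P : Measure Ω) (X : ℕ → Ω → 𝓧) (F : Set (𝓧 → ℝ))
    (P' : Measure Ω') (K : Ω' → (↥F × ↥(Set.Icc (0:ℝ) 1)) → ℝ) : Prop :=
  ∀ (f₁ f₂ : ↥F) (t₁ t₂ : ↥(Set.Icc (0:ℝ) 1)),
    cov P' (fun ω => K ω (f₁, t₁)) (fun ω => K ω (f₂, t₂))
      = min (t₁ : ℝ) (t₂ : ℝ) *
        ((∑' k : ℕ, cov P (fun ω => (f₁ : 𝓧 → ℝ) (X 0 ω)) fun ω => (f₂ : 𝓧 → ℝ) (X k ω))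
          + ∑' k : ℕ, cov P (fun ω => (f₁ : 𝓧 → ℝ) (X (k + 1) ω)) fun ω => (f₂ : 𝓧 → ℝ) (X 0 ω))

/-! ### Bracketing numbers and entropy conditions -/

/-- `F` is covered by `n` brackets `[l_i, u_i]` with `l_i, u_i ∈ G ⊆ B'`, of `L^s(ν)`-size at
most `ε` and of `B'`-size at most `A`.  Here `toFun` realizes elements of `B'` as functions
and `nB` measures their size. -/
def CoversWithBrackets {𝓧 B' : Type*} [MeasurableSpace 𝓧] (ν : Measure 𝓧) (s : ℝ≥0∞)
    (nB : B' → ℝ≥0∞) (toFun : B' → 𝓧 → ℝ) (F : Set (𝓧 → ℝ)) (G : Set B')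
    (ε A : ℝ) (n : ℕ) : Prop :=
  ∃ l u : Fin n → B',
    (∀ i, l i ∈ G ∧ u i ∈ G ∧
      eLpNorm (fun x => toFun (u i) x - toFun (l i) x) s ν ≤ ENNReal.ofReal ε ∧
      nB (u i) ≤ ENNReal.ofReal A ∧ nB (l i) ≤ ENNReal.ofReal A) ∧
    ∀ f ∈ F, ∃ i, ∀ x, toFun (l i) x ≤ f x ∧ f x ≤ toFun (u i) x

/-- The bracketing number `N(ε, A, F, G, L^s(ν))` (as an extended natural). -/
noncomputable def bracketingNumber {𝓧 B' : Type*} [MeasurableSpace 𝓧] (ν : Measure 𝓧)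
    (s : ℝ≥0∞) (nB : B' → ℝ≥0∞) (toFun : B' → 𝓧 → ℝ) (F : Set (𝓧 → ℝ)) (G : Set B')
    (ε A : ℝ) : ℝ≥0∞ :=
  sInf {N : ℝ≥0∞ | ∃ n : ℕ, N = (n : ℝ≥0∞) ∧ CoversWithBrackets ν s nB toFun F G ε A n}

/-- The exponential entropy condition with exponent `γ`:
`∫₀¹ ε^r sup_{ε≤δ≤1} N²(δ, exp(C δ^{-1/γ}), F, G, L^s(ν)) dε < ∞`
for some `C > 0` and some `r > -1`. -/
def ExpEntropy {𝓧 B' : Type*} [MeasurableSpace 𝓧] (ν : Measure 𝓧) (s : ℝ≥0∞)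
    (nB : B' → ℝ≥0∞) (toFun : B' → 𝓧 → ℝ) (F : Set (𝓧 → ℝ)) (G : Set B') (γ : ℝ) : Prop :=
  ∃ C : ℝ, 0 < C ∧ ∃ r : ℝ, -1 < r ∧
    (∫⁻ ε in Set.Ioo (0:ℝ) 1,
      ENNReal.ofReal (ε ^ r) *
        (⨆ δ ∈ Set.Icc ε 1,
          (bracketingNumber ν s nB toFun F G δ (Real.exp (C * δ ^ (-γ⁻¹)))) ^ 2)) < ⊤

/-- The entropy condition with bracket-size function `Ψ`:
`∫₀¹ ε^r sup_{ε≤δ≤1} N²(δ, Ψ(δ⁻¹), F, G, L^s(ν)) dε < ∞`. -/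
def PsiEntropy {𝓧 B' : Type*} [MeasurableSpace 𝓧] (ν : Measure 𝓧) (s : ℝ≥0∞)
    (nB : B' → ℝ≥0∞) (toFun : B' → 𝓧 → ℝ) (F : Set (𝓧 → ℝ)) (G : Set B')
    (Ψ : ℝ → ℝ) (r : ℝ) : Prop :=
  (∫⁻ ε in Set.Ioo (0:ℝ) 1,
    ENNReal.ofReal (ε ^ r) *
      (⨆ δ ∈ Set.Icc ε 1, (bracketingNumber ν s nB toFun F G δ (Ψ δ⁻¹)) ^ 2)) < ⊤

/-! ### Finite dimensional sequential CLT and moment bounds -/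

/-- `V_n` converges in distribution (via Cramér–Wold) to the centered multivariate normal law
with covariance matrix `Sig`. -/
def CramerWoldLimit {Ω : Type*} [MeasurableSpace Ω] {k : ℕ} (P : Measure Ω)
    (V : ℕ → Ω → Fin k → ℝ) (Sig : Matrix (Fin k) (Fin k) ℝ) : Prop :=
  ∀ a : Fin k → ℝ, ∃ v : ℝ≥0, (v : ℝ) = ∑ i, ∑ j, a i * Sig i j * a j ∧
    ∀ φ : BoundedContinuousFunction ℝ ℝ,
      Tendsto (fun n => ∫ ω, φ (∑ i, a i * V n ω i) ∂P) atTop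
        (nhds (∫ y, φ y ∂(gaussianReal 0 v)))

/-- Assumption 1: the finite dimensional sequential CLT for `G`-observables. -/
def FidiSeqCLT {Ω 𝓧 C' : Type*} [MeasurableSpace Ω] [MeasurableSpace 𝓧] (P : Measure Ω)
    (X : ℕ → Ω → 𝓧) (μ : Measure 𝓧) (toFun : C' → 𝓧 → ℝ) (G : Set C') : Prop :=
  ∀ (k : ℕ) (g : Fin k → C'), (∀ i, g i ∈ G) → ∀ t : Fin k → ℝ,
    (∀ i, t i ∈ Set.Icc (0:ℝ) 1) →
    ∃ Sig : Matrix (Fin k) (Fin k) ℝ,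
      CramerWoldLimit P (fun n ω i => seqSum X μ (toFun (g i)) (t i) n ω) Sig

/-- Assumption 1 with the Kiefer covariance matrix
`Σ_{ij} = min(t_i,t_j) (∑_{k≥0} Cov(f_i(X₀),f_j(X_k)) + ∑_{k≥1} Cov(f_j(X₀),f_i(X_k)))`. -/
def FidiSeqCLTKiefer {Ω 𝓧 C' : Type*} [MeasurableSpace Ω] [MeasurableSpace 𝓧] (P : Measure Ω)
    (X : ℕ → Ω → 𝓧) (μ : Measure 𝓧) (toFun : C' → 𝓧 → ℝ) (G : Set C') : Prop :=
  ∀ (k : ℕ) (g : Fin k → C'), (∀ i, g i ∈ G) → ∀ t : Fin k → ℝ,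
    (∀ i, t i ∈ Set.Icc (0:ℝ) 1) →
    CramerWoldLimit P (fun n ω i => seqSum X μ (toFun (g i)) (t i) n ω)
      (fun i j => min (t i) (t j) *
        ((∑' k' : ℕ, cov P (fun ω => toFun (g i) (X 0 ω)) fun ω => toFun (g j) (X k' ω))
          + ∑' k' : ℕ, cov P (fun ω => toFun (g j) (X 0 ω)) fun ω => toFun (g i) (X (k' + 1) ω)))

/-- Assumption 2: the `2p`-th moment bound
`E[(∑_{i=1}^n (f(X_i)-μf))^{2p}] ≤ ∑_{i=1}^p n^i ‖f‖_s^i Φ_i(‖f‖_C)` for all `f ∈ G'`. -/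
def MomentBound2p {Ω 𝓧 C' : Type*} [MeasurableSpace Ω] [MeasurableSpace 𝓧] (P : Measure Ω)
    (X : ℕ → Ω → 𝓧) (μ : Measure 𝓧) (toFun : C' → 𝓧 → ℝ) (nC : C' → ℝ) (G' : Set C')
    (p : ℕ) (s : ℝ≥0∞) (Φ : ℕ → ℝ → ℝ) : Prop :=
  ∀ f ∈ G', ∀ n : ℕ,
    (∫ ω, (∑ i ∈ Finset.Icc 1 n, (toFun f (X i ω) - ∫ x, toFun f x ∂μ)) ^ (2 * p) ∂P)
      ≤ ∑ i ∈ Finset.Icc 1 p,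
          (n : ℝ) ^ i * (eLpNorm (toFun f) s μ).toReal ^ i * Φ i (nC f)

/-- The multiple mixing property with respect to the space realized by `toFun`,
with mixing rate `θ` and polynomial degree bound `d₀`. -/
def MultipleMixing {Ω 𝓧 C' : Type*} [MeasurableSpace Ω] [MeasurableSpace 𝓧] (P : Measure Ω)
    (X : ℕ → Ω → 𝓧) (μ : Measure 𝓧) (toFun : C' → 𝓧 → ℝ) (nC : C' → ℝ) (s : ℝ≥0∞)
    (θ : ℝ) (d₀ : ℕ) : Prop :=
  ∀ p : ℕ, 0 < p → ∃ (ℓ : ℕ) (Q : MvPolynomial (Fin p) ℝ), Q.totalDegree ≤ d₀ ∧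
    ∀ f : C', (∫ x, toFun f x ∂μ) = 0 → (∀ x, |toFun f x| ≤ 1) →
    ∀ i : ℕ → ℕ, Monotone i → ∀ q : ℕ, 1 ≤ q → q ≤ p →
      |cov P (fun ω => ∏ j ∈ Finset.range q, toFun f (X (i j) ω))
          (fun ω => ∏ j ∈ Finset.Icc q p, toFun f (X (i j) ω))|
        ≤ (eLpNorm (toFun f) s μ).toReal * nC f ^ ℓ *
            MvPolynomial.eval (fun j : Fin p => ((i ((j : ℕ) + 1) : ℝ) - (i (j : ℕ) : ℝ))) Q *
            θ ^ (i q - i (q - 1))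

/-! ### Time discretization -/

/-- `τ_q t`, the largest point of the form `(j-1) 2^{-q}`, `j = 1, …, 2^q`, below `t`. -/
noncomputable def tauq (q : ℕ) (t : ℝ) : ℝ :=
  (min ⌊(2:ℝ) ^ q * t⌋₊ (2 ^ q - 1) : ℕ) * ((2:ℝ) ^ q)⁻¹

/-- The dyadic partition interval `T_{q,j}` of `[0,1]` (for `j = 0, …, 2^q - 1`). -/
noncomputable def Tsetq (q j : ℕ) : Set ℝ :=
  if j + 1 = 2 ^ q then Set.Icc (1 - ((2:ℝ) ^ q)⁻¹) 1
  else Set.Ico ((j : ℝ) * ((2:ℝ) ^ q)⁻¹) (((j : ℝ) + 1) * ((2:ℝ) ^ q)⁻¹)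

/-! ### Markov chains and Banach spaces of functions -/

/-- The Markov property of `(X_i)` with transition kernel `κ`:
`E[h(X_0,…,X_n) g(X_{n+1})] = E[h(X_0,…,X_n) ∫ g dκ(X_n, ·)]` for bounded measurable `g, h`. -/
def IsMarkovChain {Ω 𝓧 : Type*} [MeasurableSpace Ω] [MeasurableSpace 𝓧] (P : Measure Ω)
    (X : ℕ → Ω → 𝓧) (κ : ProbabilityTheory.Kernel 𝓧 𝓧) : Prop :=
  ∀ n : ℕ, ∀ g : 𝓧 → ℝ, Measurable g → (∃ M, ∀ x, |g x| ≤ M) →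
  ∀ h : (Fin (n + 1) → 𝓧) → ℝ, Measurable h → (∃ M, ∀ v, |h v| ≤ M) →
    (∫ ω, h (fun i => X (i : ℕ) ω) * g (X (n + 1) ω) ∂P)
      = ∫ ω, h (fun i => X (i : ℕ) ω) * ∫ y, g y ∂(κ (X n ω)) ∂P

/-- Condition (A): `1 ∈ B`; `|f|, conj f ∈ B` for `f ∈ B`; elements of `B` are measurable;
Dirac measures are continuous functionals on `B`. -/
def CondA {𝓧 B : Type*} [MeasurableSpace 𝓧] [NormedAddCommGroup B] [NormedSpace ℂ B]
    (ι : B →ₗ[ℂ] 𝓧 → ℂ) : Prop :=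
  (∀ b : B, Measurable (ι b)) ∧
  (∃ one : B, ι one = fun _ => 1) ∧
  (∀ b : B, ∃ babs : B, ι babs = fun x => (‖ι b x‖ : ℂ)) ∧
  (∀ b : B, ∃ bconj : B, ι bconj = fun x => starRingEnd ℂ (ι b x)) ∧
  (∀ x : 𝓧, ∃ c : ℝ, 0 ≤ c ∧ ∀ b : B, ‖ι b x‖ ≤ c * ‖b‖)

/-- Condition (B): `B` is continuously included in `L^m(ν)`. -/
def CondB {𝓧 B : Type*} [MeasurableSpace 𝓧] [NormedAddCommGroup B] [NormedSpace ℂ B]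
    (ι : B →ₗ[ℂ] 𝓧 → ℂ) (ν : Measure 𝓧) (m : ℝ≥0∞) : Prop :=
  ∃ K : ℝ, 0 < K ∧ ∀ b : B, eLpNorm (ι b) m ν ≤ ENNReal.ofReal (K * ‖b‖)

/-- Condition (C): geometric ergodicity of the operator `PB` on `B`,
`‖P^n f − (νf) 1‖_B ≤ κc ‖f‖_B θ^n`. -/
def CondC {𝓧 B : Type*} [MeasurableSpace 𝓧] [NormedAddCommGroup B] [NormedSpace ℂ B]
    (ι : B →ₗ[ℂ] 𝓧 → ℂ) (ν : Measure 𝓧) (one : B) (PB : B →L[ℂ] B)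
    (κc θ : ℝ) : Prop :=
  ∀ b : B, ∀ n : ℕ, ‖(PB ^ n) b - (∫ x, ι b x ∂ν) • one‖ ≤ κc * ‖b‖ * θ ^ n

/-- Condition (E): products of functions of `B` bounded by one belong to `B`, with
`‖fg‖_B ≤ C max(‖f‖_B, ‖g‖_B)^ℓ`. -/
def CondE {𝓧 B : Type*} [MeasurableSpace 𝓧] [NormedAddCommGroup B] [NormedSpace ℂ B]
    (ι : B →ₗ[ℂ] 𝓧 → ℂ) : Prop :=
  ∃ C : ℝ, 0 < C ∧ ∃ ℓ : ℕ, ∀ f g : B,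
    (∀ x, ‖ι f x‖ ≤ 1) → (∀ x, ‖ι g x‖ ≤ 1) →
    ∃ h : B, (∀ x, ι h x = ι f x * ι g x) ∧ ‖h‖ ≤ C * max ‖f‖ ‖g‖ ^ ℓ

/-- Compatibility of the abstract operator `PB` with the Markov kernel `κ`:
`(PB f)(x) = ∫ f dκ(x,·)`. -/
def MarkovOpCompat {𝓧 B : Type*} [MeasurableSpace 𝓧] [NormedAddCommGroup B]
    [NormedSpace ℂ B] (ι : B →ₗ[ℂ] 𝓧 → ℂ) (κ : ProbabilityTheory.Kernel 𝓧 𝓧)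
    (PB : B →L[ℂ] B) : Prop :=
  ∀ b : B, ∀ x, ι (PB b) x = ∫ y, ι b y ∂(κ x)

/-- Condition (D) for a real function `f`: the perturbed operators `P_{f,t} φ = P(e^{itf} φ)`
act on `B` for `t` near `0`, and `t ↦ P_{f,t}` is twice continuously differentiable with
`k`-th derivative at `0` given by `φ ↦ P((if)^k φ)`. -/
def CondD {𝓧 B : Type*} [MeasurableSpace 𝓧] [NormedAddCommGroup B] [NormedSpace ℂ B]
    (ι : B →ₗ[ℂ] 𝓧 → ℂ) (κ : ProbabilityTheory.Kernel 𝓧 𝓧) (f : 𝓧 → ℝ) : Prop :=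
  ∃ ε : ℝ, 0 < ε ∧ ∃ Q : ℝ → B →L[ℂ] B,
    (∀ t ∈ Set.Ioo (-ε) ε, ∀ φ : B, ∀ x,
      ι (Q t φ) x = ∫ y, Complex.exp (Complex.I * (t : ℂ) * (f y : ℂ)) * ι φ y ∂(κ x)) ∧
    ContDiffOn ℝ 2 Q (Set.Ioo (-ε) ε) ∧
    (∀ φ : B, ∀ x, ι (derivWithin Q (Set.Ioo (-ε) ε) 0 φ) x
        = ∫ y, (Complex.I * (f y : ℂ)) * ι φ y ∂(κ x)) ∧
    (∀ φ : B, ∀ x, ι (derivWithin (derivWithin Q (Set.Ioo (-ε) ε)) (Set.Ioo (-ε) ε) 0 φ) x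
        = ∫ y, (Complex.I * (f y : ℂ)) ^ 2 * ι φ y ∂(κ x))

/-- An element of `B` is real-valued. -/
def RealValued {𝓧 B : Type*} [NormedAddCommGroup B] [NormedSpace ℂ B]
    (ι : B →ₗ[ℂ] 𝓧 → ℂ) (b : B) : Prop :=
  ∀ x, (ι b x).im = 0

end SECLT

open SECLT

/-!
Iterating the Markov property turns `E[g(X₀) f(X_k)]` into `∫ g · P^k f dν`; since `P` fixes
constants, the covariance is `∫ g · (P^k f − νf) dν`, which Hölder's inequality for the conjugate
pair `(s, m)`, the embedding (B) and the geometric ergodicity (C) bound by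
`K κ ‖g‖_{L^s} ‖f‖_B θ^k`. The Markov property is only assumed for bounded observables; it is
extended by truncation and dominated convergence, first to `f ∈ L^m(ν)` (the invariance of `ν`
makes `x ↦ ∫ |f| dP(x, ·)` integrable) and then to `g ∈ L^s(ν)`.
-/

open scoped Topology

section Truncation

variable {α E : Type*} [NormedAddCommGroup E]

noncomputable def normTrunc (F : α → E) (N : ℕ) : α → E := {x | ‖F x‖ ≤ N}.indicator F

lemma norm_normTrunc_le_coe (F : α → E) (N : ℕ) (x : α) : ‖normTrunc F N x‖ ≤ N := by
  by_cases hx : ‖F x‖ ≤ N <;> simp [normTrunc, Set.indicator, hx]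

lemma norm_normTrunc_le (F : α → E) (N : ℕ) (x : α) : ‖normTrunc F N x‖ ≤ ‖F x‖ :=
  norm_indicator_le_norm_self F x

lemma tendsto_normTrunc (F : α → E) (x : α) :
    Tendsto (fun N => normTrunc F N x) atTop (𝓝 (F x)) := by
  refine tendsto_const_nhds.congr' (eventually_atTop.2 ⟨⌈‖F x‖⌉₊, fun N hN => ?_⟩)
  exact (Set.indicator_of_mem (s := {x | ‖F x‖ ≤ N})
    ((Nat.le_ceil _).trans (Nat.cast_le.2 hN)) F).symm

variable [MeasurableSpace α] {μ : Measure α}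

lemma MeasureTheory.StronglyMeasurable.normTrunc {F : α → E} (hF : StronglyMeasurable F)
    (N : ℕ) : StronglyMeasurable (normTrunc F N) :=
  hF.indicator (measurableSet_le hF.norm stronglyMeasurable_const)

variable [NormedSpace ℝ E]

lemma tendsto_integral_normTrunc {F : α → E} (hF : StronglyMeasurable F)
    (hFint : Integrable F μ) :
    Tendsto (fun N => ∫ x, normTrunc F N x ∂μ) atTop (𝓝 (∫ x, F x ∂μ)) :=
  tendsto_integral_of_dominated_convergence (fun x => ‖F x‖)
    (fun N => (hF.normTrunc N).aestronglyMeasurable) hFint.norm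
    (fun N => ae_of_all _ (norm_normTrunc_le F N)) (ae_of_all _ (tendsto_normTrunc F))

lemma tendsto_integral_normTrunc_smul {p q : ℝ≥0∞} [p.HolderConjugate q] {u : α → ℝ}
    (hu : StronglyMeasurable u) (hup : MemLp u p μ) {G : α → E} (hG : MemLp G q μ) :
    Tendsto (fun N => ∫ x, normTrunc u N x • G x ∂μ) atTop (𝓝 (∫ x, u x • G x ∂μ)) :=
  tendsto_integral_of_dominated_convergence (fun x => ‖u x‖ * ‖G x‖)
    (fun N => (hu.normTrunc N).aestronglyMeasurable.smul hG.1) (hup.norm.integrable_mul hG.norm)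
    (fun N => ae_of_all _ fun x => by
      rw [norm_smul]; gcongr; exact norm_normTrunc_le u N x)
    (ae_of_all _ fun x => (tendsto_normTrunc u x).smul_const _)

end Truncation

section Holder

variable {α E : Type*} [MeasurableSpace α] [NormedAddCommGroup E] [NormedSpace ℝ E]
  {μ : Measure α} {p q : ℝ≥0∞} [p.HolderConjugate q] {f : α → ℝ} {G : α → E}

lemma norm_integral_smul_le (hf : MemLp f p μ) (hG : MemLp G q μ) :
    ‖∫ x, f x • G x ∂μ‖ ≤ (eLpNorm f p μ).toReal * (eLpNorm G q μ).toReal := by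
  calc ‖∫ x, f x • G x ∂μ‖ ≤ ∫ x, ‖f x • G x‖ ∂μ := norm_integral_le_integral_norm _
    _ = (eLpNorm (f • G) 1 μ).toReal := by
      rw [eLpNorm_one_eq_lintegral_enorm, ← integral_norm_eq_lintegral_enorm (hf.1.smul hG.1)]
      rfl
    _ ≤ (eLpNorm f p μ * eLpNorm G q μ).toReal :=
      ENNReal.toReal_mono (ENNReal.mul_ne_top hf.eLpNorm_ne_top hG.eLpNorm_ne_top)
        (eLpNorm_smul_le_mul_eLpNorm hG.1 hf.1)
    _ = _ := ENNReal.toReal_mul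

end Holder

section BoundedTestFunctions

variable {Ω 𝓧 E : Type*} [MeasurableSpace Ω] [MeasurableSpace 𝓧] {P : Measure Ω}
  {ν : Measure 𝓧} [NormedAddCommGroup E] [NormedSpace ℝ E]

theorem integral_smul_eq_of_forall_bounded {p q : ℝ≥0∞} [p.HolderConjugate q] {Y Z : Ω → 𝓧}
    (hY : Measurable Y) (hZ : Measurable Z) (hYν : P.map Y = ν) (hZν : P.map Z = ν)
    {F F' : 𝓧 → E} (hF : MemLp F q ν) (hF' : MemLp F' q ν)
    (h : ∀ g : 𝓧 → ℝ, Measurable g → (∃ M, ∀ x, |g x| ≤ M) →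
      ∫ ω, g (Y ω) • F (Z ω) ∂P = ∫ ω, g (Y ω) • F' (Y ω) ∂P)
    {g : 𝓧 → ℝ} (hg : MemLp g p ν) :
    ∫ ω, g (Y ω) • F (Z ω) ∂P = ∫ ω, g (Y ω) • F' (Y ω) ∂P := by
  set g' := hg.1.mk g
  have hg' : StronglyMeasurable g' := hg.1.stronglyMeasurable_mk
  have hgY : (fun ω => g (Y ω)) =ᵐ[P] fun ω => g' (Y ω) :=
    ae_eq_comp hY.aemeasurable (hYν ▸ hg.1.ae_eq_mk)
  have hg'P : MemLp (fun ω => g' (Y ω)) p P :=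
    (hYν ▸ hg.ae_eq hg.1.ae_eq_mk : MemLp g' p (P.map Y)).comp_of_map hY.aemeasurable
  have hFZ : MemLp (fun ω => F (Z ω)) q P := (hZν ▸ hF).comp_of_map hZ.aemeasurable
  have hF'Y : MemLp (fun ω => F' (Y ω)) q P := (hYν ▸ hF').comp_of_map hY.aemeasurable
  have hcongr : ∀ G : Ω → E, ∫ ω, g (Y ω) • G ω ∂P = ∫ ω, g' (Y ω) • G ω ∂P := fun G =>
    integral_congr_ae (hgY.mono fun ω hω => congrArg (· • G ω) hω)
  rw [hcongr, hcongr]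
  refine tendsto_nhds_unique
    ((tendsto_integral_normTrunc_smul (hg'.comp_measurable hY) hg'P hFZ).congr fun N => ?_)
    (tendsto_integral_normTrunc_smul (hg'.comp_measurable hY) hg'P hF'Y)
  exact h (normTrunc g' N) (hg'.normTrunc N).measurable
    ⟨N, fun x => by simpa only [Real.norm_eq_abs] using norm_normTrunc_le_coe g' N x⟩

end BoundedTestFunctions

namespace SECLT

variable {Ω 𝓧 E B : Type*} [MeasurableSpace Ω] [MeasurableSpace 𝓧] {P : Measure Ω}
  {X : ℕ → Ω → 𝓧} {κ : Kernel 𝓧 𝓧} {ν : Measure 𝓧}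
  [NormedAddCommGroup E] [NormedSpace ℝ E] [CompleteSpace E]
  [NormedAddCommGroup B] [NormedSpace ℂ B] {ι : B →ₗ[ℂ] 𝓧 → ℂ} {PB : B →L[ℂ] B}

theorem IsMarkovChain.map_eq [IsFiniteMeasure P] [IsFiniteKernel κ] (hX : IsMarkovChain P X κ)
    (hXmeas : ∀ i, Measurable (X i)) (hinv : κ ∘ₘ ν = ν) (hinit : P.map (X 0) = ν) (n : ℕ) :
    P.map (X n) = ν := by
  induction n with
  | zero => exact hinit
  | succ n ih =>
    have : IsFiniteMeasure ν := hinit ▸ inferInstance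
    ext A hA
    have hstep := hX n (A.indicator 1) (measurable_one.indicator hA)
      ⟨1, fun x => by by_cases hx : x ∈ A <;> simp [hx]⟩ (fun _ => 1) measurable_const
      ⟨1, by simp⟩
    simp only [one_mul] at hstep
    rw [← measureReal_eq_measureReal_iff, ← hinv]
    calc (P.map (X (n + 1))).real A = ∫ ω, A.indicator 1 (X (n + 1) ω) ∂P := by
          rw [← integral_indicator_one hA, integral_map (hXmeas _).aemeasurable
            (stronglyMeasurable_one.indicator hA).aestronglyMeasurable]
      _ = ∫ ω, ∫ y, A.indicator 1 y ∂κ (X n ω) ∂P := hstep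
      _ = ∫ ω, (κ (X n ω)).real A ∂P := by simp_rw [integral_indicator_one hA]
      _ = ∫ x, (κ x).real A ∂ν := by
          rw [← ih, integral_map (hXmeas n).aemeasurable
            (f := fun x => (κ x).real A) (κ.measurable_coe hA).ennreal_toReal.aestronglyMeasurable]
      _ = (κ ∘ₘ ν).real A := by
          simp_rw [measureReal_def]
          rw [Measure.bind_apply hA κ.aemeasurable, integral_toReal
            (κ.measurable_coe hA).aemeasurable (ae_of_all _ fun _ => measure_lt_top _ _)]

theorem IsMarkovChain.integral_smul_succ_of_bounded [IsFiniteMeasure P] [IsMarkovKernel κ]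
    (hX : IsMarkovChain P X κ) (hXmeas : ∀ i, Measurable (X i)) {g : 𝓧 → ℝ}
    (hg : Measurable g) (hgb : ∃ M, ∀ x, |g x| ≤ M) {F : 𝓧 → E} (hF : StronglyMeasurable F)
    (hFb : ∃ M, ∀ x, ‖F x‖ ≤ M) (n : ℕ) :
    ∫ ω, g (X 0 ω) • F (X (n + 1) ω) ∂P = ∫ ω, g (X 0 ω) • ∫ y, F y ∂κ (X n ω) ∂P := by
  obtain ⟨Mg, hMg⟩ := hgb
  obtain ⟨MF, hMF⟩ := hFb
  have hg_le : ∀ ω {v : E}, ‖v‖ ≤ MF → ‖g (X 0 ω) • v‖ ≤ Mg * MF := fun ω v h => by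
    rw [norm_smul, Real.norm_eq_abs]
    exact mul_le_mul (hMg _) h (norm_nonneg _) ((abs_nonneg _).trans (hMg (X 0 ω)))
  have hFκ : ∀ x, Integrable F (κ x) := fun x =>
    .of_bound hF.aestronglyMeasurable MF (ae_of_all _ hMF)
  have hint : Integrable (fun ω => g (X 0 ω) • F (X (n + 1) ω)) P :=
    .of_bound ((hg.comp (hXmeas 0)).aestronglyMeasurable.smul
      (hF.comp_measurable (hXmeas _)).aestronglyMeasurable) (Mg * MF)
      (ae_of_all _ fun ω => hg_le ω (hMF _))
  have hint' : Integrable (fun ω => g (X 0 ω) • ∫ y, F y ∂κ (X n ω)) P :=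
    .of_bound ((hg.comp (hXmeas 0)).aestronglyMeasurable.smul
      (hF.integral_kernel.comp_measurable (hXmeas _)).aestronglyMeasurable) (Mg * MF)
      (ae_of_all _ fun ω => hg_le ω
        (by simpa using norm_integral_le_of_norm_le_const (μ := κ (X n ω)) (ae_of_all _ hMF)))
  -- Test against continuous linear functionals to reduce to the real-valued Markov property.
  rw [SeparatingDual.eq_iff_forall_dual_eq (R := ℝ)]
  intro L
  rw [← L.integral_comp_comm hint, ← L.integral_comp_comm hint']
  simp_rw [map_smul, smul_eq_mul, ← L.integral_comp_comm (hFκ _)]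
  exact hX n (fun y => L (F y)) (L.continuous.comp_stronglyMeasurable hF).measurable
    ⟨‖L‖ * MF, fun y => (L.le_opNorm _).trans (by gcongr; exact hMF y)⟩
    (fun v => g (v 0)) (hg.comp (measurable_pi_apply 0)) ⟨Mg, fun v => hMg _⟩

theorem IsMarkovChain.integral_smul_succ [IsFiniteMeasure P] [IsMarkovKernel κ]
    (hX : IsMarkovChain P X κ) (hXmeas : ∀ i, Measurable (X i)) (hinv : κ ∘ₘ ν = ν)
    (hmap : ∀ i, P.map (X i) = ν) {g : 𝓧 → ℝ} (hg : Measurable g) (hgb : ∃ M, ∀ x, |g x| ≤ M)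
    {F : 𝓧 → E} (hF : StronglyMeasurable F) (hFint : Integrable F ν) (n : ℕ) :
    ∫ ω, g (X 0 ω) • F (X (n + 1) ω) ∂P = ∫ ω, g (X 0 ω) • ∫ y, F y ∂κ (X n ω) ∂P := by
  obtain ⟨Mg, hMg⟩ := hgb
  have hg_le : ∀ ω {v : E} {r : ℝ}, ‖v‖ ≤ r → ‖g (X 0 ω) • v‖ ≤ Mg * r := fun ω v r h => by
    rw [norm_smul, Real.norm_eq_abs]
    exact mul_le_mul (hMg _) h (norm_nonneg _) ((abs_nonneg _).trans (hMg (X 0 ω)))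
  have hFP : Integrable (fun ω => F (X (n + 1) ω)) P := by
    rw [← hmap (n + 1)] at hFint; exact hFint.comp_aemeasurable (hXmeas _).aemeasurable
  have hFκ : ∀ᵐ ω ∂P, Integrable F (κ (X n ω)) := by
    rw [← hinv] at hFint
    exact ae_of_ae_map (hXmeas n).aemeasurable
      ((hmap n).symm ▸ Measure.ae_integrable_of_integrable_comp hFint)
  have hFκP : Integrable (fun ω => ∫ y, ‖F y‖ ∂κ (X n ω)) P := by
    rw [← hinv] at hFint
    have h := Measure.integrable_integral_norm_of_integrable_comp hFint
    rw [← hmap n] at h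
    exact h.comp_aemeasurable (hXmeas n).aemeasurable
  have hlhs : Tendsto (fun N : ℕ => ∫ ω, g (X 0 ω) • normTrunc F N (X (n + 1) ω) ∂P) atTop
      (𝓝 (∫ ω, g (X 0 ω) • F (X (n + 1) ω) ∂P)) :=
    tendsto_integral_of_dominated_convergence (fun ω => Mg * ‖F (X (n + 1) ω)‖)
      (fun N => (hg.comp (hXmeas 0)).aestronglyMeasurable.smul
        ((hF.normTrunc N).comp_measurable (hXmeas _)).aestronglyMeasurable)
      (hFP.norm.const_mul Mg)
      (fun N => ae_of_all _ fun ω => hg_le ω (norm_normTrunc_le F N _))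
      (ae_of_all _ fun ω => (tendsto_normTrunc F _).const_smul _)
  have hrhs : Tendsto (fun N : ℕ => ∫ ω, g (X 0 ω) • ∫ y, normTrunc F N y ∂κ (X n ω) ∂P) atTop
      (𝓝 (∫ ω, g (X 0 ω) • ∫ y, F y ∂κ (X n ω) ∂P)) :=
    tendsto_integral_of_dominated_convergence (fun ω => Mg * ∫ y, ‖F y‖ ∂κ (X n ω))
      (fun N => (hg.comp (hXmeas 0)).aestronglyMeasurable.smul
        ((hF.normTrunc N).integral_kernel.comp_measurable (hXmeas _)).aestronglyMeasurable)
      (hFκP.const_mul Mg)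
      (fun N => hFκ.mono fun ω hω => hg_le ω
        (norm_integral_le_of_norm_le hω.norm (ae_of_all _ (norm_normTrunc_le F N))))
      (hFκ.mono fun ω hω => (tendsto_integral_normTrunc hF hω).const_smul _)
  refine tendsto_nhds_unique (hlhs.congr fun N => ?_) hrhs
  exact hX.integral_smul_succ_of_bounded hXmeas hg ⟨Mg, hMg⟩ (hF.normTrunc N)
    ⟨N, norm_normTrunc_le_coe F N⟩ n

theorem MarkovOpCompat.pow_apply_of_eq_one [IsMarkovKernel κ] (hPB : MarkovOpCompat ι κ PB)
    {one : B} (hone : ι one = fun _ => 1) (k : ℕ) : ι ((PB ^ k) one) = fun _ => 1 := by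
  induction k with
  | zero => exact hone
  | succ k ih =>
    funext x
    rw [pow_succ', mul_apply_eq_comp, hPB, ih]
    simp

theorem IsMarkovChain.integral_smul_pow_apply [IsFiniteMeasure P] [IsMarkovKernel κ]
    (hX : IsMarkovChain P X κ) (hXmeas : ∀ i, Measurable (X i)) (hinv : κ ∘ₘ ν = ν)
    (hmap : ∀ i, P.map (X i) = ν) (hPB : MarkovOpCompat ι κ PB)
    (hι : ∀ b, Measurable (ι b)) (hιint : ∀ b, Integrable (ι b) ν)
    {g : 𝓧 → ℝ} (hg : Measurable g) (hgb : ∃ M, ∀ x, |g x| ≤ M) (k : ℕ) (b : B) :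
    ∫ ω, g (X 0 ω) • ι b (X k ω) ∂P = ∫ ω, g (X 0 ω) • ι ((PB ^ k) b) (X 0 ω) ∂P := by
  induction k generalizing b with
  | zero => rfl
  | succ k ih =>
    rw [hX.integral_smul_succ hXmeas hinv hmap hg hgb (hι b).stronglyMeasurable (hιint b)]
    simp_rw [← hPB b, ih, pow_succ, mul_apply_eq_comp]

theorem IsMarkovChain.integral_smul_eq_integral_pow_apply [IsFiniteMeasure P] [IsMarkovKernel κ]
    [IsFiniteMeasure ν] (hX : IsMarkovChain P X κ) (hXmeas : ∀ i, Measurable (X i))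
    (hinv : κ ∘ₘ ν = ν) (hmap : ∀ i, P.map (X i) = ν) (hPB : MarkovOpCompat ι κ PB)
    (hι : ∀ b, Measurable (ι b)) {s m : ℝ≥0∞} [s.HolderConjugate m] (hιm : ∀ b, MemLp (ι b) m ν)
    {g : 𝓧 → ℝ} (hg : MemLp g s ν) (k : ℕ) (b : B) :
    ∫ ω, g (X 0 ω) • ι b (X k ω) ∂P = ∫ x, g x • ι ((PB ^ k) b) x ∂ν := by
  have hιint : ∀ b, Integrable (ι b) ν := fun b =>
    (hιm b).integrable (ENNReal.HolderTriple.le m s 1)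
  rw [integral_smul_eq_of_forall_bounded (hXmeas 0) (hXmeas k) (hmap 0) (hmap k) (hιm b) (hιm _)
    (fun g hg hgb => hX.integral_smul_pow_apply hXmeas hinv hmap hPB hι hιint hg hgb k b) hg]
  conv_rhs => rw [← hmap 0]
  exact (integral_map (hXmeas 0).aemeasurable ((hmap 0).symm ▸ hg.1.smul (hιm _).1)).symm

end SECLT

theorem exponential_covariance_decay_general
    {Ω 𝓧 B : Type} [MeasurableSpace Ω] [MeasurableSpace 𝓧]
    [NormedAddCommGroup B] [NormedSpace ℂ B]
    (P : MeasureTheory.Measure Ω) [MeasureTheory.IsProbabilityMeasure P]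
    (X : ℕ → Ω → 𝓧) (hXmeas : ∀ i, Measurable (X i))
    (κ : ProbabilityTheory.Kernel 𝓧 𝓧) [ProbabilityTheory.IsMarkovKernel κ]
    (hMarkov : IsMarkovChain P X κ)
    (ν : MeasureTheory.Measure 𝓧) [MeasureTheory.IsProbabilityMeasure ν]
    (hinv : ν.bind (fun x => κ x) = ν)
    (hinit : MeasureTheory.Measure.map (X 0) P = ν)
    (ι : B →ₗ[ℂ] 𝓧 → ℂ)
    (PB : B →L[ℂ] B) (hPB : MarkovOpCompat ι κ PB)
    (m s : ℝ≥0∞) (hms : 1 / m + 1 / s = 1)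
    (hA : CondA ι)
    (one : B) (hone : ι one = fun _ => 1)
    (hB : CondB ι ν m)
    (κc θ : ℝ) (hκc : 0 < κc)
    (hC : CondC ι ν one PB κc θ) :
    ∃ C : ℝ, 0 < C ∧ ∀ b : B, ∀ g : 𝓧 → ℝ, MeasureTheory.MemLp g s ν → ∀ k : ℕ,
      ‖∫ ω, (g (X 0 ω) : ℂ) * (ι b (X k ω) - ∫ x, ι b x ∂ν) ∂P‖
        ≤ C * (MeasureTheory.eLpNorm g s ν).toReal * ‖b‖ * θ ^ k := by
  obtain ⟨K, hK, hKb⟩ := hB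
  have : m.HolderConjugate s := ⟨by simpa only [one_div, inv_one] using hms⟩
  have hmap := hMarkov.map_eq hXmeas hinv hinit
  have hιm : ∀ b, MemLp (ι b) m ν := fun b =>
    ⟨(hA.1 b).aestronglyMeasurable, (hKb b).trans_lt ENNReal.ofReal_lt_top⟩
  refine ⟨K * κc, mul_pos hK hκc, fun b g hg k => ?_⟩
  set c := ∫ x, ι b x ∂ν
  have hcentered : ι ((PB ^ k) (b - c • one)) = ι ((PB ^ k) b - c • one) := by
    simp only [map_sub, map_smul, hPB.pow_apply_of_eq_one hone, hone]
  have hcov : ∫ ω, (g (X 0 ω) : ℂ) * (ι b (X k ω) - c) ∂P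
      = ∫ x, g x • ι ((PB ^ k) b - c • one) x ∂ν := by
    rw [← hcentered, ← hMarkov.integral_smul_eq_integral_pow_apply hXmeas hinv hmap hPB hA.1 hιm hg]
    simp only [map_sub, map_smul, hone, Pi.sub_apply, Pi.smul_apply, smul_eq_mul, mul_one,
      Complex.real_smul]
  calc ‖∫ ω, (g (X 0 ω) : ℂ) * (ι b (X k ω) - c) ∂P‖
      ≤ (eLpNorm g s ν).toReal * (eLpNorm (ι ((PB ^ k) b - c • one)) m ν).toReal := by
        rw [hcov]; exact norm_integral_smul_le hg (hιm _)
    _ ≤ (eLpNorm g s ν).toReal * (K * ‖(PB ^ k) b - c • one‖) := by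
        gcongr; exact ENNReal.toReal_le_of_le_ofReal (by positivity) (hKb _)
    _ ≤ (eLpNorm g s ν).toReal * (K * (κc * ‖b‖ * θ ^ k)) := by gcongr; exact hC b k
    _ = K * κc * (eLpNorm g s ν).toReal * ‖b‖ * θ ^ k := by ring

/-- **Exponential covariance decay under geometric ergodicity**
(Lemma 6.3 of the paper).  Under conditions (A), (B), (C), there is `C > 0` such that
`|Cov(g(X₀), f(X_k))| ≤ C ‖g‖_{L^s(ν)} ‖f‖_B θ^k` for all `f ∈ B`, `g ∈ L^s(ν)` with
`s = m/(m−1)`, where `Cov(g(X₀), f(X_k)) = E[g(X₀)(f(X_k) − νf)]`. -/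
theorem exponential_covariance_decay
    {Ω 𝓧 B : Type} [MeasurableSpace Ω] [MeasurableSpace 𝓧]
    [NormedAddCommGroup B] [NormedSpace ℂ B] [CompleteSpace B]
    (P : MeasureTheory.Measure Ω) [MeasureTheory.IsProbabilityMeasure P]
    (X : ℕ → Ω → 𝓧) (hXmeas : ∀ i, Measurable (X i))
    (κ : ProbabilityTheory.Kernel 𝓧 𝓧) [ProbabilityTheory.IsMarkovKernel κ]
    (hMarkov : IsMarkovChain P X κ)
    (ν : MeasureTheory.Measure 𝓧) [MeasureTheory.IsProbabilityMeasure ν]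
    (hinv : ν.bind (fun x => κ x) = ν)
    (hinit : MeasureTheory.Measure.map (X 0) P = ν)
    (ι : B →ₗ[ℂ] 𝓧 → ℂ)
    (PB : B →L[ℂ] B) (hPB : MarkovOpCompat ι κ PB)
    (m s : ℝ≥0∞) (hm : 1 ≤ m) (hms : 1 / m + 1 / s = 1)
    (hA : CondA ι)
    (one : B) (hone : ι one = fun _ => 1)
    (hB : CondB ι ν m)
    (κc θ : ℝ) (hκc : 0 < κc) (hθ : θ ∈ Set.Ico (0:ℝ) 1)
    (hC : CondC ι ν one PB κc θ) :
    ∃ C : ℝ, 0 < C ∧ ∀ b : B, ∀ g : 𝓧 → ℝ, MeasureTheory.MemLp g s ν → ∀ k : ℕ,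
      ‖∫ ω, (g (X 0 ω) : ℂ) * (ι b (X k ω) - ∫ x, ι b x ∂ν) ∂P‖
        ≤ C * (MeasureTheory.eLpNorm g s ν).toReal * ‖b‖ * θ ^ k :=
  exponential_covariance_decay_general P X hXmeas κ hMarkov ν hinv hinit ι PB hPB m s hms hA one
    hone hB κc θ hκc hC
end

section
/- Asymptotics of the two-sample comparison process: Let (X_i)_{i≥0} be an X-valued stationary process with marginal distribution μ and F a uniformly bounded class of measurable real functions on X. For f ∈ F set F_j(f) = j^{−1} Σ_{i=1}^{j} f(X_i) for 1 ≤ j ≤ n (with F_0 = 0), F_{j,n}(f) = (n−j+1)^{−1} Σ_{i=j}^n f(X_i) for 1 ≤ j ≤ n (with F_{n+1,n} = 0), and define R_n(f,t) = √n · ([nt]/n) · ((n−[nt])/n) · ( F_{[nt]}(f) − F_{[nt]+1,n}(f) ) for (f,t) ∈ F×[0,1]. If the sequential empirical process U_n converges in distribution in ℓ^∞(F×[0,1]) to a tight centred Gaussian process K, then R_n converges in distribution in ℓ^∞(F×[0,1]) to the process ( K(f,t) − t·K(f,1) )_{(f,t)∈F×[0,1]}. -/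
open MeasureTheory Filter ProbabilityTheory
open scoped ENNReal NNReal

open SECLT

namespace SECLT

/-- The two-sample comparison process
`R_n(f,t) = √n (⌊nt⌋/n)((n−⌊nt⌋)/n)(F_{⌊nt⌋}(f) − F_{⌊nt⌋+1,n}(f))`. -/
noncomputable def twoSampleProc {Ω 𝓧 : Type*} (X : ℕ → Ω → 𝓧) (F : Set (𝓧 → ℝ))
    (n : ℕ) (ω : Ω) : (↥F × ↥(Set.Icc (0:ℝ) 1)) → ℝ :=
  fun p =>
    Real.sqrt (n : ℝ) * ((⌊(n : ℝ) * (p.2 : ℝ)⌋₊ : ℝ) / n)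
      * (((n : ℝ) - (⌊(n : ℝ) * (p.2 : ℝ)⌋₊ : ℝ)) / n)
      * (((⌊(n : ℝ) * (p.2 : ℝ)⌋₊ : ℝ))⁻¹
            * (∑ i ∈ Finset.Icc 1 ⌊(n : ℝ) * (p.2 : ℝ)⌋₊, (p.1 : 𝓧 → ℝ) (X i ω))
        - ((n : ℝ) - (⌊(n : ℝ) * (p.2 : ℝ)⌋₊ : ℝ))⁻¹
            * ∑ i ∈ Finset.Icc (⌊(n : ℝ) * (p.2 : ℝ)⌋₊ + 1) n, (p.1 : 𝓧 → ℝ) (X i ω))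

end SECLT

/-!
Writing `j = ⌊nt⌋` and `S_j = ∑_{i ≤ j} f(X_i)`, one has exactly
`R_n(f,t) = n^{-1/2} (S_j - (j/n) S_n) = U_n(f,t) - (j/n) U_n(f,1)`,
so `R_n` differs from `B(U_n)`, where `B x (f,t) = x(f,t) - t x(f,1)`, by
`(t - j/n) U_n(f,1) = O(n^{-1/2})` uniformly in `(f,t)` and `ω`. The map `B` is Lipschitz on
`ℓ^∞(F × [0,1])`, so `B(U_n) ⇒ B(K)` by the continuous mapping theorem, and a uniformly
vanishing perturbation does not change the limit because the limit is tight: near a compact set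
every bounded continuous functional is uniformly continuous, and an Urysohn cut-off controls the
outer mass far from it.
-/

open scoped UniformConvergence Topology Pointwise
open Set

namespace SECLT

section SupTopology

variable {S : Type*}

theorem supDist_eq_edist (x y : S → ℝ) :
    supDist x y = edist (UniformFun.ofFun x) (UniformFun.ofFun y) := by
  simp [supDist, UniformFun.edist_def, edist_dist, Real.dist_eq]

theorem supContinuous_iff_continuous {φ : (S → ℝ) → ℝ} :
    SupContinuous φ ↔ Continuous fun u : S →ᵤ ℝ => φ (UniformFun.toFun u) := by
  rw [EMetric.continuous_iff]
  constructor
  · intro hφ u ε hε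
    obtain ⟨r, -, hr0, hr⟩ := ENNReal.lt_iff_exists_real_btwn.1 hε
    obtain ⟨δ, hδ, hu⟩ := hφ (UniformFun.toFun u) r (ENNReal.ofReal_pos.1 hr0)
    refine ⟨ENNReal.ofReal δ, ENNReal.ofReal_pos.2 hδ, fun v hv => ?_⟩
    have h := hu (UniformFun.toFun v) (by rw [supDist_eq_edist, edist_comm]; exact hv.le)
    rw [edist_dist, Real.dist_eq, abs_sub_comm]
    exact (ENNReal.ofReal_le_ofReal h).trans_lt hr
  · intro hφ x ε hε
    obtain ⟨δ', hδ', hx⟩ := hφ (UniformFun.ofFun x) (ENNReal.ofReal ε) (ENNReal.ofReal_pos.2 hε)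
    obtain ⟨δ, -, hδ0, hδ⟩ := ENNReal.lt_iff_exists_real_btwn.1 hδ'
    refine ⟨δ, ENNReal.ofReal_pos.1 hδ0, fun y hy => ?_⟩
    rw [supDist_eq_edist, edist_comm] at hy
    have h := hx (UniformFun.ofFun y) (hy.trans_lt hδ)
    rw [edist_dist, Real.dist_eq, abs_sub_comm] at h
    exact (ENNReal.ofReal_lt_ofReal_iff hε).1 (by simpa using h) |>.le

theorem SupTotallyBounded.totallyBounded {T : Set (S → ℝ)} (hT : SupTotallyBounded T) :
    TotallyBounded (UniformFun.ofFun '' T) := by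
  rw [EMetric.totallyBounded_iff]
  intro ε hε
  obtain ⟨δ, -, hδ0, hδ⟩ := ENNReal.lt_iff_exists_real_btwn.1 hε
  obtain ⟨A, hA⟩ := hT δ (ENNReal.ofReal_pos.1 hδ0)
  refine ⟨UniformFun.ofFun '' A, A.finite_toSet.image _, ?_⟩
  rintro _ ⟨x, hx, rfl⟩
  obtain ⟨y, hy, hxy⟩ := hA x hx
  exact mem_biUnion (mem_image_of_mem _ hy) ((supDist_eq_edist x y ▸ hxy).trans_lt hδ)

end SupTopology

section OuterExpectation

variable {Ω : Type*} [MeasurableSpace Ω] {P : Measure Ω} [IsProbabilityMeasure P]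

def majorantIntegrals (P : Measure Ω) (Z : Ω → ℝ) : Set ℝ :=
  {r : ℝ | ∃ Y : Ω → ℝ, Measurable Y ∧ Integrable Y P ∧ (∀ ω, Z ω ≤ Y ω) ∧
    (∫ ω, Y ω ∂P) = r}

omit [IsProbabilityMeasure P] in
theorem outerExp_eq_sInf (Z : Ω → ℝ) : outerExp P Z = sInf (majorantIntegrals P Z) := rfl

theorem majorantIntegrals_nonempty {Z : Ω → ℝ} (hZ : BddAbove (range Z)) :
    (majorantIntegrals P Z).Nonempty := by
  obtain ⟨M, hM⟩ := hZ
  exact ⟨M, fun _ => M, measurable_const, integrable_const M,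
    fun ω => hM (mem_range_self ω), by simp⟩

theorem majorantIntegrals_bddBelow {Z : Ω → ℝ} (hZ : BddBelow (range Z)) :
    BddBelow (majorantIntegrals P Z) := by
  obtain ⟨c, hc⟩ := hZ
  refine ⟨c, ?_⟩
  rintro _ ⟨Y, -, hY, hZY, rfl⟩
  calc c = ∫ _, c ∂P := by simp
    _ ≤ ∫ ω, Y ω ∂P :=
      integral_mono (integrable_const c) hY fun ω => (hc (mem_range_self ω)).trans (hZY ω)

theorem outerExp_le_add_add {Z W G : Ω → ℝ} {a : ℝ} (hZ : BddBelow (range Z))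
    (hW : Bornology.IsBounded (range W)) (hG : Bornology.IsBounded (range G))
    (h : ∀ ω, Z ω ≤ W ω + a + G ω) :
    outerExp P Z ≤ outerExp P W + a + outerExp P G := by
  have hsum : outerExp P Z - a ≤ sInf (majorantIntegrals P W + majorantIntegrals P G) := by
    refine le_csInf ((majorantIntegrals_nonempty hW.bddAbove).add
      (majorantIntegrals_nonempty hG.bddAbove)) ?_
    rintro _ ⟨_, ⟨Y₁, hY₁, hY₁i, hWY₁, rfl⟩, _, ⟨Y₂, hY₂, hY₂i, hGY₂, rfl⟩, rfl⟩
    have hY₁a : Integrable (fun ω => Y₁ ω + a) P := hY₁i.add (integrable_const a)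
    have hmaj : outerExp P Z ≤ ∫ ω, Y₁ ω + a + Y₂ ω ∂P :=
      csInf_le (majorantIntegrals_bddBelow hZ) ⟨fun ω => Y₁ ω + a + Y₂ ω,
        (hY₁.add_const a).add hY₂, hY₁a.add hY₂i,
        fun ω => (h ω).trans (by linarith [hWY₁ ω, hGY₂ ω]), rfl⟩
    rw [integral_add hY₁a hY₂i, integral_add hY₁i (integrable_const a)] at hmaj
    simp only [integral_const, probReal_univ, smul_eq_mul, one_mul] at hmaj
    dsimp only
    linarith
  rw [csInf_add (majorantIntegrals_nonempty hW.bddAbove) (majorantIntegrals_bddBelow hW.bddBelow)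
    (majorantIntegrals_nonempty hG.bddAbove) (majorantIntegrals_bddBelow hG.bddBelow)] at hsum
  rw [outerExp_eq_sInf W, outerExp_eq_sInf G]
  linarith

theorem abs_outerExp_sub_le {Z W G : Ω → ℝ} {a : ℝ} (hZ : Bornology.IsBounded (range Z))
    (hW : Bornology.IsBounded (range W)) (hG : Bornology.IsBounded (range G))
    (h : ∀ ω, |Z ω - W ω| ≤ a + G ω) :
    |outerExp P Z - outerExp P W| ≤ a + outerExp P G := by
  have h₁ := outerExp_le_add_add (P := P) (a := a) hZ.bddBelow hW hG fun ω => by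
    linarith [(abs_le.1 (h ω)).2]
  have h₂ := outerExp_le_add_add (P := P) (a := a) hW.bddBelow hZ hG fun ω => by
    linarith [(abs_le.1 (h ω)).1]
  rw [abs_le]
  constructor <;> linarith

theorem outerExp_le_mul_measureReal {Z : Ω → ℝ} {A : Set Ω} {c : ℝ}
    (hZ : ∀ ω, Z ω ∈ Icc 0 c) (hZA : ∀ ω ∉ A, Z ω = 0) :
    outerExp P Z ≤ c * P.real A := by
  have hA := measurableSet_toMeasurable P A
  have hle : ∀ ω, Z ω ≤ (toMeasurable P A).indicator (fun _ => c) ω := fun ω => by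
    by_cases hω : ω ∈ A
    · rw [indicator_of_mem (subset_toMeasurable P A hω)]
      exact (hZ ω).2
    · rw [hZA ω hω]
      exact indicator_nonneg (fun _ _ => (hZ ω).1.trans (hZ ω).2) ω
  calc outerExp P Z ≤ ∫ ω, (toMeasurable P A).indicator (fun _ => c) ω ∂P :=
        csInf_le (majorantIntegrals_bddBelow ⟨0, forall_mem_range.2 fun ω => (hZ ω).1⟩)
          ⟨_, measurable_const.indicator hA, (integrable_const c).indicator hA, hle, rfl⟩
    _ = c * P.real A := by
        rw [integral_indicator_const c hA, measureReal_def, measure_toMeasurable, smul_eq_mul,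
          mul_comm, measureReal_def]

end OuterExpectation

theorem IsCompact.exists_abs_sub_le_add_cutoff {E : Type*} [EMetricSpace E] {f : E → ℝ}
    (hf : Continuous f) {M : ℝ} (hM : ∀ x, |f x| ≤ M) {C : Set E} (hC : IsCompact C) {η : ℝ}
    (hη : 0 < η) :
    ∃ δ > 0, ∃ g : C(E, ℝ), (∀ x, g x ∈ Icc (0 : ℝ) 1) ∧ EqOn g 0 C ∧
      ∀ u v, edist u v < ENNReal.ofReal δ → |f v - f u| ≤ 2 * η + 2 * M * g u := by
  obtain ⟨ε, hε, hunif⟩ := mem_uniformity_edist.1 <|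
    hC.uniformContinuousAt_of_continuousAt f (fun x _ => hf.continuousAt)
      (Metric.dist_mem_uniformity hη)
  obtain ⟨δ, -, hδ0, hδε⟩ := ENNReal.lt_iff_exists_real_btwn.1 hε
  have hδ : 0 < δ := ENNReal.ofReal_pos.1 hδ0
  have hnear : ∀ z ∈ C, ∀ y, edist z y < ENNReal.ofReal δ → |f z - f y| < η :=
    fun z hz y hzy => by simpa [Real.dist_eq] using hunif (hzy.trans hδε) hz
  obtain ⟨g, hgC, hg1, hg01⟩ := exists_continuous_zero_one_of_isClosed hC.isClosed
    (Metric.isOpen_thickening (δ := δ / 2)).isClosed_compl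
    (disjoint_compl_right_iff_subset.2 (Metric.self_subset_thickening (by positivity) C))
  refine ⟨δ / 2, by positivity, g, hg01, hgC, fun u v huv => ?_⟩
  have hM0 : 0 ≤ M := (abs_nonneg _).trans (hM u)
  by_cases hu : u ∈ Metric.thickening (δ / 2) C
  · obtain ⟨z, hz, huz⟩ := (Metric.mem_thickening_iff_exists_edist_lt C u).1 hu
    have hzv : edist z v < ENNReal.ofReal δ := by
      calc edist z v ≤ edist z u + edist u v := edist_triangle z u v
        _ < ENNReal.ofReal (δ / 2) + ENNReal.ofReal (δ / 2) :=
          ENNReal.add_lt_add (by rwa [edist_comm]) huv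
        _ = ENNReal.ofReal δ := by
          rw [← ENNReal.ofReal_add (by positivity) (by positivity), add_halves]
    have hzu : edist z u < ENNReal.ofReal δ := by
      rw [edist_comm]
      exact huz.trans (ENNReal.ofReal_lt_ofReal_iff (by positivity) |>.2 (by linarith))
    have hgu : 0 ≤ 2 * M * g u := mul_nonneg (by positivity) (hg01 u).1
    linarith [abs_sub_le (f v) (f z) (f u), abs_sub_comm (f v) (f z), hnear z hz v hzv,
      hnear z hz u hzu]
  · rw [hg1 hu, Pi.one_apply, mul_one]
    linarith [abs_sub (f v) (f u), hM u, hM v]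

theorem isBounded_range_of_abs_le {α : Type*} {f : α → ℝ} {M : ℝ} (h : ∀ a, |f a| ≤ M) :
    Bornology.IsBounded (range f) :=
  isBounded_iff_forall_norm_le.2 ⟨M, forall_mem_range.2 h⟩

section Convergence

variable {S S' Ω Ω' : Type*} [MeasurableSpace Ω] [MeasurableSpace Ω'] {P : Measure Ω}
  {P' : Measure Ω'}

def TightInUniformFun (P' : Measure Ω') (K : Ω' → S → ℝ) : Prop :=
  ∀ ε : ℝ, 0 < ε → ∃ C : Set (S →ᵤ ℝ), IsCompact C ∧
    P' {ω | UniformFun.ofFun (K ω) ∉ C} ≤ ENNReal.ofReal ε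

theorem TightProcess.tightInUniformFun {K : Ω' → S → ℝ} (hK : TightProcess P' K) :
    TightInUniformFun P' K := by
  intro ε hε
  obtain ⟨T, hT, -, hKT⟩ := hK ε hε
  refine ⟨closure (UniformFun.ofFun '' T),
    hT.totallyBounded.closure.isCompact_of_isClosed isClosed_closure, (measure_mono ?_).trans hKT⟩
  intro ω hω hKω
  exact hω (subset_closure (mem_image_of_mem _ hKω))

theorem TightInUniformFun.comp {K : Ω' → S → ℝ} (hK : TightInUniformFun P' K)
    {Ψ : (S → ℝ) → S' → ℝ}
    (hΨ : Continuous fun u : S →ᵤ ℝ => UniformFun.ofFun (Ψ (UniformFun.toFun u))) :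
    TightInUniformFun P' fun ω => Ψ (K ω) := by
  intro ε hε
  obtain ⟨C, hC, hKC⟩ := hK ε hε
  refine ⟨_, hC.image hΨ, (measure_mono ?_).trans hKC⟩
  intro ω hω hKω
  exact hω (mem_image_of_mem _ hKω)

theorem ConvInDistr.comp {U : ℕ → Ω → S → ℝ} {K : Ω' → S → ℝ} (hUK : ConvInDistr P U P' K)
    {Ψ : (S → ℝ) → S' → ℝ}
    (hΨ : Continuous fun u : S →ᵤ ℝ => UniformFun.ofFun (Ψ (UniformFun.toFun u))) :
    ConvInDistr P (fun n ω => Ψ (U n ω)) P' fun ω => Ψ (K ω) := fun φ ⟨M, hM⟩ hφ =>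
  hUK (fun x => φ (Ψ x)) ⟨M, fun _ => hM _⟩
    (supContinuous_iff_continuous.2 ((supContinuous_iff_continuous.1 hφ).comp hΨ))

variable [IsProbabilityMeasure P] [IsProbabilityMeasure P']

theorem ConvInDistr.eventually_abs_outerExp_sub_lt {U V : ℕ → Ω → S → ℝ} {K : Ω' → S → ℝ}
    (hUK : ConvInDistr P U P' K) (hK : TightInUniformFun P' K) {r : ℕ → ℝ}
    (hr : Tendsto r atTop (𝓝 0)) (hUV : ∀ n ω s, |V n ω s - U n ω s| ≤ r n)
    {φ : (S → ℝ) → ℝ} {M : ℝ} (hM : ∀ x, |φ x| ≤ M) (hφ : SupContinuous φ) {ε : ℝ}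
    (hε : 0 < ε) :
    ∀ᶠ n in atTop,
      |outerExp P (fun ω => φ (V n ω)) - outerExp P (fun ω => φ (U n ω))| < ε := by
  have hM0 : 0 ≤ M := (abs_nonneg _).trans (hM 0)
  set η := ε / (4 + 2 * M)
  have hη : 0 < η := by positivity
  obtain ⟨C, hC, hKC⟩ := hK η hη
  obtain ⟨δ, hδ, g, hg01, hgC, hφg⟩ :=
    hC.exists_abs_sub_le_add_cutoff (supContinuous_iff_continuous.1 hφ) (fun u => hM _) hη
  set ψ : (S → ℝ) → ℝ := fun x => 2 * M * g (UniformFun.ofFun x)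
  have hψ : ∀ x, ψ x ∈ Icc 0 (2 * M) := fun x =>
    ⟨mul_nonneg (by positivity) (hg01 _).1, mul_le_of_le_one_right (by positivity) (hg01 _).2⟩
  have hψM : ∀ x, |ψ x| ≤ 2 * M := fun x => abs_le.2 ⟨by linarith [(hψ x).1], (hψ x).2⟩
  have hψK : outerExp P' (fun ω => ψ (K ω)) ≤ 2 * M * η :=
    (outerExp_le_mul_measureReal (A := {ω | UniformFun.ofFun (K ω) ∉ C}) (fun ω => hψ _)
      fun ω hω => by simp [ψ, hgC (not_not.1 hω)]).trans
      (mul_le_mul_of_nonneg_left (ENNReal.toReal_le_of_le_ofReal hη.le hKC) (by positivity))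
  have hψU := hUK ψ ⟨2 * M, hψM⟩
    (supContinuous_iff_continuous.2 (continuous_const.mul g.continuous))
  filter_upwards [hψU.eventually (gt_mem_nhds (hψK.trans_lt (lt_add_of_pos_right _ hη))),
    hr.eventually (gt_mem_nhds hδ)] with n hψn hrn
  have hpt : ∀ ω, |φ (V n ω) - φ (U n ω)| ≤ 2 * η + ψ (U n ω) := fun ω => by
    refine hφg (UniformFun.ofFun (U n ω)) (UniformFun.ofFun (V n ω))
      (lt_of_le_of_lt ?_ ((ENNReal.ofReal_lt_ofReal_iff hδ).2 hrn))
    rw [← supDist_eq_edist]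
    exact iSup_le fun s => ENNReal.ofReal_le_ofReal (by rw [abs_sub_comm]; exact hUV n ω s)
  calc _ ≤ 2 * η + outerExp P (fun ω => ψ (U n ω)) :=
        abs_outerExp_sub_le (isBounded_range_of_abs_le fun ω => hM _)
          (isBounded_range_of_abs_le fun ω => hM _) (isBounded_range_of_abs_le fun ω => hψM _) hpt
    _ < 2 * η + (2 * M * η + η) := by gcongr
    _ < (4 + 2 * M) * η := by linarith
    _ = ε := mul_div_cancel₀ ε (by positivity)

theorem ConvInDistr.of_abs_sub_le {U V : ℕ → Ω → S → ℝ} {K : Ω' → S → ℝ}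
    (hUK : ConvInDistr P U P' K) (hK : TightInUniformFun P' K) {r : ℕ → ℝ}
    (hr : Tendsto r atTop (𝓝 0)) (hUV : ∀ n ω s, |V n ω s - U n ω s| ≤ r n) :
    ConvInDistr P V P' K := by
  intro φ ⟨M, hM⟩ hφ
  refine tendsto_of_tendsto_of_dist (hUK φ ⟨M, hM⟩ hφ) (Metric.tendsto_nhds.2 fun ε hε => ?_)
  filter_upwards [hUK.eventually_abs_outerExp_sub_lt hK hr hUV hM hφ hε] with n hn
  rwa [Real.dist_eq, sub_zero, abs_dist, Real.dist_eq, abs_sub_comm]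

end Convergence

section TwoSample

/-- Sends a Kiefer process to a Brownian bridge in the time variable. -/
def bridge {A : Type*} (x : A × Icc (0 : ℝ) 1 → ℝ) : A × Icc (0 : ℝ) 1 → ℝ :=
  fun p => x p - p.2 * x (p.1, 1)

theorem lipschitzWith_bridge {A : Type*} :
    LipschitzWith 2 fun u : A × Icc (0 : ℝ) 1 →ᵤ ℝ =>
      UniformFun.ofFun (bridge (UniformFun.toFun u)) := by
  refine UniformFun.lipschitzWith_ofFun_iff.2 fun p => ?_
  have h : LipschitzWith (1 + ‖(p.2 : ℝ)‖₊ * 1) fun u : A × Icc (0 : ℝ) 1 →ᵤ ℝ =>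
      UniformFun.toFun u p - (p.2 : ℝ) • UniformFun.toFun u (p.1, 1) :=
    (UniformFun.lipschitzWith_eval p).sub
      ((lipschitzWith_smul (p.2 : ℝ)).comp (UniformFun.lipschitzWith_eval (p.1, 1)))
  have ht : ‖(p.2 : ℝ)‖₊ ≤ 1 := by
    rw [← NNReal.coe_le_coe, coe_nnnorm, Real.norm_eq_abs, abs_of_nonneg p.2.2.1]
    exact p.2.2.2
  refine h.weaken ?_
  rw [mul_one]
  exact (add_le_add le_rfl ht).trans_eq one_add_one_eq_two

theorem sum_Icc_sub_const (g : ℕ → ℝ) (m : ℝ) (k : ℕ) :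
    ∑ i ∈ Finset.Icc 1 k, (g i - m) = ∑ i ∈ Finset.Icc 1 k, g i - k * m := by
  simp [Finset.sum_sub_distrib, nsmul_eq_mul]

theorem sum_Icc_one_add_sum_Icc (g : ℕ → ℝ) {j n : ℕ} (hjn : j ≤ n) :
    ∑ i ∈ Finset.Icc 1 j, g i + ∑ i ∈ Finset.Icc (j + 1) n, g i = ∑ i ∈ Finset.Icc 1 n, g i := by
  have hIcc : ∀ k, Finset.Icc 1 k = Finset.Ioc 0 k := Finset.Icc_add_one_left_eq_Ioc 0
  rw [hIcc, hIcc, Finset.Icc_add_one_left_eq_Ioc]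
  exact Finset.sum_Ioc_consecutive g (Nat.zero_le j) hjn

variable {Ω 𝓧 : Type*} [MeasurableSpace 𝓧]

theorem twoSampleProc_eq_seqEmpProc (X : ℕ → Ω → 𝓧) (μ : Measure 𝓧) (F : Set (𝓧 → ℝ))
    (n : ℕ) (ω : Ω) (p : F × Icc (0 : ℝ) 1) :
    twoSampleProc X F n ω p = seqEmpProc X μ F n ω p
      - (⌊(n : ℝ) * p.2⌋₊ / n : ℝ) * seqEmpProc X μ F n ω (p.1, 1) := by
  set j := ⌊(n : ℝ) * p.2⌋₊ with hj
  have hjn : j ≤ n := Nat.floor_le_of_le (mul_le_of_le_one_right n.cast_nonneg p.2.2.2)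
  simp only [twoSampleProc, seqEmpProc, seqSum, sum_Icc_sub_const, ← hj, Set.Icc.coe_one,
    mul_one, Nat.floor_natCast]
  rw [← sum_Icc_one_add_sum_Icc _ hjn]
  set A := ∑ i ∈ Finset.Icc 1 j, (p.1 : 𝓧 → ℝ) (X i ω) with hA
  set B := ∑ i ∈ Finset.Icc (j + 1) n, (p.1 : 𝓧 → ℝ) (X i ω) with hB
  set m := ∫ x, (p.1 : 𝓧 → ℝ) x ∂μ
  rcases Nat.eq_zero_or_pos j with hj0 | hj0
  · simp [hA, hj0]
  rcases hjn.eq_or_lt with hjn | hjn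
  · have hn : (n : ℝ) ≠ 0 := Nat.cast_ne_zero.2 (by omega)
    simp [hB, hjn, hn]
  have hn : (0 : ℝ) < n := by exact_mod_cast hj0.trans hjn
  have hnj : (n : ℝ) - j ≠ 0 := sub_ne_zero.2 (by exact_mod_cast hjn.ne')
  have hs : √(n : ℝ) ^ 2 = n := Real.sq_sqrt hn.le
  have : √(n : ℝ) ≠ 0 := by positivity
  field_simp
  linear_combination (A * n - j * A - j * B) * hs

theorem abs_sub_floor_mul_div_le {n : ℕ} (hn : 0 < n) {t : ℝ} (ht : 0 ≤ t) :
    |t - ⌊(n : ℝ) * t⌋₊ / n| ≤ 1 / n := by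
  have hn' : (0 : ℝ) < n := by exact_mod_cast hn
  have h₁ := Nat.floor_le (mul_nonneg hn'.le ht)
  have h₂ := Nat.lt_floor_add_one ((n : ℝ) * t)
  rw [show t - ⌊(n : ℝ) * t⌋₊ / n = ((n : ℝ) * t - ⌊(n : ℝ) * t⌋₊) / n by field_simp, abs_div,
    abs_of_pos hn', div_le_div_iff_of_pos_right hn', abs_le]
  constructor <;> linarith

theorem abs_seqSum_one_le (X : ℕ → Ω → 𝓧) (μ : Measure 𝓧) [IsFiniteMeasure μ] {f : 𝓧 → ℝ}
    {M : ℝ} (hf : ∀ x, |f x| ≤ M) (n : ℕ) (ω : Ω) :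
    |seqSum X μ f 1 n ω| ≤ √(n : ℝ) * (M + M * μ.real univ) := by
  have hm : |∫ x, f x ∂μ| ≤ M * μ.real univ :=
    norm_integral_le_of_norm_le_const (f := f) (C := M) (Eventually.of_forall hf)
  have hterm : ∀ i, |f (X i ω) - ∫ x, f x ∂μ| ≤ M + M * μ.real univ := fun i =>
    (abs_sub _ _).trans (add_le_add (hf _) hm)
  have hsum : |∑ i ∈ Finset.Icc 1 n, (f (X i ω) - ∫ x, f x ∂μ)| ≤ n * (M + M * μ.real univ) :=
    (Finset.abs_sum_le_sum_abs _ _).trans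
      ((Finset.sum_le_card_nsmul _ _ _ fun i _ => hterm i).trans_eq (by simp [mul_add]))
  rw [seqSum, mul_one, Nat.floor_natCast, abs_mul, abs_inv, abs_of_nonneg (Real.sqrt_nonneg _)]
  calc (√(n : ℝ))⁻¹ * |∑ i ∈ Finset.Icc 1 n, (f (X i ω) - ∫ x, f x ∂μ)|
      ≤ (√(n : ℝ))⁻¹ * (n * (M + M * μ.real univ)) := by gcongr
    _ = √(n : ℝ) * (M + M * μ.real univ) := by rw [← mul_assoc, inv_mul_eq_div, Real.div_sqrt]

theorem abs_twoSampleProc_sub_bridge_le (X : ℕ → Ω → 𝓧) (μ : Measure 𝓧) [IsFiniteMeasure μ]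
    {F : Set (𝓧 → ℝ)} {M : ℝ} (hM : ∀ f ∈ F, ∀ x, |f x| ≤ M) (n : ℕ) (ω : Ω)
    (p : F × Icc (0 : ℝ) 1) :
    |twoSampleProc X F n ω p - bridge (seqEmpProc X μ F n ω) p|
      ≤ (M + M * μ.real univ) / √(n : ℝ) := by
  rcases n.eq_zero_or_pos with rfl | hn
  · simp [twoSampleProc, bridge, seqEmpProc, seqSum]
  have hU := abs_seqSum_one_le X μ (hM _ p.1.2) n ω
  have hn' : (0 : ℝ) < n := by exact_mod_cast hn
  calc |twoSampleProc X F n ω p - bridge (seqEmpProc X μ F n ω) p|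
      = |(p.2 : ℝ) - ⌊(n : ℝ) * p.2⌋₊ / n| * |seqEmpProc X μ F n ω (p.1, 1)| := by
        rw [twoSampleProc_eq_seqEmpProc X μ, bridge, ← abs_mul]
        ring_nf
    _ ≤ 1 / n * (√(n : ℝ) * (M + M * μ.real univ)) :=
        mul_le_mul (abs_sub_floor_mul_div_le hn p.2.2.1) hU (abs_nonneg _) (by positivity)
    _ = (M + M * μ.real univ) / √(n : ℝ) := by
        field_simp
        rw [Real.sq_sqrt hn'.le]

end TwoSample

end SECLT

theorem two_sample_process_asymptotics_general
    {Ω Ω' 𝓧 : Type} [MeasurableSpace Ω] [MeasurableSpace Ω'] [MeasurableSpace 𝓧]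
    (P : MeasureTheory.Measure Ω) [MeasureTheory.IsProbabilityMeasure P]
    (X : ℕ → Ω → 𝓧)
    (μ : MeasureTheory.Measure 𝓧) (hμ : MeasureTheory.Measure.map (X 0) P = μ)
    (F : Set (𝓧 → ℝ)) (hFbd : UnifBounded F)
    (P' : MeasureTheory.Measure Ω') [MeasureTheory.IsProbabilityMeasure P']
    (K : Ω' → (↥F × ↥(Set.Icc (0:ℝ) 1)) → ℝ)
    (hTight : TightProcess P' K)
    (hconv : ConvInDistr P (seqEmpProc X μ F) P' K) :
    ConvInDistr P (twoSampleProc X F) P'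
      (fun ω p => K ω p - (p.2 : ℝ) *
        K ω (p.1, ⟨1, Set.mem_Icc.mpr ⟨zero_le_one, le_refl 1⟩⟩)) := by
  obtain ⟨M, hM⟩ := hFbd
  have : IsFiniteMeasure μ := hμ ▸ inferInstance
  have hbridge := (lipschitzWith_bridge (A := F)).continuous
  have hrate : Tendsto (fun n : ℕ => (M + M * μ.real univ) / √(n : ℝ)) atTop (𝓝 0) :=
    tendsto_const_nhds.div_atTop
      (Real.tendsto_sqrt_atTop.comp tendsto_natCast_atTop_atTop)
  exact (hconv.comp hbridge).of_abs_sub_le (hTight.tightInUniformFun.comp hbridge) hrate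
    (abs_twoSampleProc_sub_bridge_le X μ hM)

/-- **Asymptotics of the two-sample comparison process** (Theorem A.1 of the paper).
If the sequential empirical process `U_n` converges in distribution in `ℓ^∞(F × [0,1])` to a
tight centred Gaussian process `K`, then `R_n ⇒ (K(f,t) − t K(f,1))_{(f,t)}`. -/
theorem two_sample_process_asymptotics
    {Ω Ω' 𝓧 : Type} [MeasurableSpace Ω] [MeasurableSpace Ω'] [MeasurableSpace 𝓧]
    (P : MeasureTheory.Measure Ω) [MeasureTheory.IsProbabilityMeasure P]
    (X : ℕ → Ω → 𝓧) (hXmeas : ∀ i, Measurable (X i)) (hstat : IsStationary P X)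
    (μ : MeasureTheory.Measure 𝓧) (hμ : MeasureTheory.Measure.map (X 0) P = μ)
    (F : Set (𝓧 → ℝ)) (hFmeas : ∀ f ∈ F, Measurable f) (hFbd : UnifBounded F)
    (P' : MeasureTheory.Measure Ω') [MeasureTheory.IsProbabilityMeasure P']
    (K : Ω' → (↥F × ↥(Set.Icc (0:ℝ) 1)) → ℝ)
    (hGauss : IsCenteredGaussian P' K) (hTight : TightProcess P' K)
    (hconv : ConvInDistr P (seqEmpProc X μ F) P' K) :
    ConvInDistr P (twoSampleProc X F) P'
      (fun ω p => K ω p - (p.2 : ℝ) *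
        K ω (p.1, ⟨1, Set.mem_Icc.mpr ⟨zero_le_one, le_refl 1⟩⟩)) :=
  two_sample_process_asymptotics_general P X μ hμ F hFbd P' K hTight hconv
end
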